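/- arXiv:1006.5947 — 3 statements merged into one kernel-verified Lean document; each statement's English description precedes it below -/
import Mathlib

section
/- Let G = H × H with diagonal subgroup D = {(h,h) : h ∈ H}. Then the maximal subgroups of G containing D are in bijection with the maximal normal subgroups of H. -/
/-!
A subgroup `K` of `H × H` containing the diagonal is determined by `N = {h | (h, 1) ∈ K}`,
since `(a, b) = (a * b⁻¹, 1) * (b, b)`; conjugating `(n, 1)` by diagonal elements shows that `N`
is normal, and conversely every normal `N` arises from the pairs congruent modulo `N`. This is an
order isomorphism between the subgroups over the diagonal and the normal subgroups of `H`, so it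
matches their coatoms.
-/

theorem Subtype.isCoatom_iff {α : Type*} [PartialOrder α] [OrderTop α] {p : α → Prop}
    [OrderTop (Subtype p)] (htop : p ⊤) {x : Subtype p} :
    IsCoatom x ↔ (x : α) ≠ ⊤ ∧ ∀ y, p y → (x : α) < y → y = ⊤ := by
  have top_eq : ((⊤ : Subtype p) : α) = ⊤ :=
    top_le_iff.mp (show (⟨⊤, htop⟩ : Subtype p) ≤ ⊤ from le_top)
  simp only [IsCoatom, ne_eq, Subtype.ext_iff, top_eq, Subtype.forall, ← Subtype.coe_lt_coe]

theorem Set.Ici.isCoatom_iff {α : Type*} [PartialOrder α] [OrderTop α] {a : α}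
    {x : Set.Ici a} : IsCoatom x ↔ IsCoatom (x : α) :=
  ⟨IsCoatom.of_isCoatom_coe_Ici, fun hx => hx.Ici x.2⟩

namespace Subgroup

variable {H : Type*} [Group H]

instance : OrderTop {N : Subgroup H // N.Normal} := Subtype.orderTop normal_top

variable (H) in
abbrev diagonal : Subgroup (H × H) := ((MonoidHom.id H).prod (MonoidHom.id H)).range

theorem mem_diagonal {p : H × H} : p ∈ diagonal H ↔ p.1 = p.2 :=
  ⟨by rintro ⟨h, rfl⟩; rfl, fun hp => ⟨p.1, Prod.ext rfl hp⟩⟩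

def diagonalMod (N : Subgroup H) [N.Normal] : Subgroup (H × H) :=
  (diagonal (H ⧸ N)).comap ((QuotientGroup.mk' N).prodMap (QuotientGroup.mk' N))

theorem mem_diagonalMod {N : Subgroup H} [N.Normal] {p : H × H} :
    p ∈ N.diagonalMod ↔ p.1 * p.2⁻¹ ∈ N := by
  rw [diagonalMod, mem_comap, mem_diagonal, ← div_eq_mul_inv]
  exact QuotientGroup.eq_iff_div_mem

theorem diagonal_le_diagonalMod (N : Subgroup H) [N.Normal] : diagonal H ≤ N.diagonalMod := by
  rintro p hp
  rw [mem_diagonalMod, mem_diagonal.mp hp, mul_inv_cancel]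
  exact N.one_mem

theorem normal_comap_inl_of_diagonal_le {K : Subgroup (H × H)} (hK : diagonal H ≤ K) :
    (K.comap (MonoidHom.inl H H)).Normal where
  conj_mem n hn g := by
    have conj_eq : ((g * n * g⁻¹, 1) : H × H) = (g, g) * (n, 1) * (g⁻¹, g⁻¹) := by simp
    rw [mem_comap, MonoidHom.inl_apply, conj_eq]
    exact mul_mem (mul_mem (hK ⟨g, rfl⟩) hn) (hK ⟨g⁻¹, rfl⟩)

theorem mem_iff_mul_inv_mem_of_diagonal_le {K : Subgroup (H × H)} (hK : diagonal H ≤ K)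
    {p : H × H} : p ∈ K ↔ ((p.1 * p.2⁻¹, 1) : H × H) ∈ K := by
  have factor : ((p.1 * p.2⁻¹, 1) : H × H) = p * (p.2⁻¹, p.2⁻¹) :=
    Prod.ext rfl (mul_inv_cancel _).symm
  rw [factor, mul_mem_cancel_right (hK (mem_diagonal.mpr rfl))]

def diagonalOrderIso : Set.Ici (diagonal H) ≃o {N : Subgroup H // N.Normal} where
  toFun K := ⟨K.1.comap (MonoidHom.inl H H), normal_comap_inl_of_diagonal_le K.2⟩
  invFun N := haveI := N.2; ⟨N.1.diagonalMod, diagonal_le_diagonalMod N.1⟩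
  left_inv K := by
    have := normal_comap_inl_of_diagonal_le K.2
    refine Subtype.ext <| ext fun p => ?_
    rw [mem_diagonalMod, mem_comap, MonoidHom.inl_apply]
    exact (mem_iff_mul_inv_mem_of_diagonal_le K.2).symm
  right_inv N := Subtype.ext <| ext fun h => by
    have := N.2
    rw [mem_comap, mem_diagonalMod, MonoidHom.inl_apply, inv_one, mul_one]
  map_rel_iff' {K L} := by
    refine ⟨fun hKL p hp => ?_, fun hKL h hh => hKL hh⟩
    rw [mem_iff_mul_inv_mem_of_diagonal_le L.2]
    exact hKL ((mem_iff_mul_inv_mem_of_diagonal_le K.2).mp hp)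

end Subgroup

theorem maximal_over_diagonal_equiv_maximal_normal_general (H : Type*) [Group H] :
    Nonempty
      ({K : Subgroup (H × H) //
          ((MonoidHom.id H).prod (MonoidHom.id H)).range ≤ K ∧ IsCoatom K} ≃
        {N : Subgroup H // N.Normal ∧ N ≠ ⊤ ∧
          ∀ M : Subgroup H, M.Normal → N < M → M = ⊤}) :=
  ⟨(Equiv.subtypeSubtypeEquivSubtypeInter _ _).symm.trans <|
    (Subgroup.diagonalOrderIso.toEquiv.subtypeEquiv fun K => by
      rw [← Set.Ici.isCoatom_iff, ← Subgroup.diagonalOrderIso.isCoatom_iff,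
        Subtype.isCoatom_iff Subgroup.normal_top]
      rfl).trans
    (Equiv.subtypeSubtypeEquivSubtypeInter _ _)⟩

/-- The maximal subgroups of `H × H` containing the diagonal subgroup are in bijection
with the maximal normal subgroups of `H`. -/
theorem maximal_over_diagonal_equiv_maximal_normal (H : Type*) [Group H] [Finite H] :
    Nonempty
      ({K : Subgroup (H × H) //
          ((MonoidHom.id H).prod (MonoidHom.id H)).range ≤ K ∧ IsCoatom K} ≃
        {N : Subgroup H // N.Normal ∧ N ≠ ⊤ ∧
          ∀ M : Subgroup H, M.Normal → N < M → M = ⊤}) :=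
  maximal_over_diagonal_equiv_maximal_normal_general H
end

section
/- For a finite group H, the number of maximal normal subgroups of H is at most the number of conjugacy classes of H minus 1; in particular it is less than the number of irreducible complex representations of H. -/
/-!
Indicator functions of normal subgroups are class functions. Pair class functions by
`⟨f, g⟩ = ∑ x ∈ G, f x * g x`. Two distinct maximal normal subgroups generate `G`, so
`|N ⊓ M| * |G| = |N| * |M|`; this makes the centered indicators `|G| • 1_N - |N| • 1_G` pairwise
orthogonal, and orthogonal to `1_G`, while none of them is isotropic. These vectors, together
with `1_G`, are therefore linearly independent in a space of dimension the number of conjugacy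
classes.
-/

section MaximalNormal

variable {G : Type*} [Group G]

def IsMaximalNormal (N : Subgroup G) : Prop :=
  N.Normal ∧ N ≠ ⊤ ∧ ∀ M : Subgroup G, M.Normal → N < M → M = ⊤

theorem IsMaximalNormal.sup_eq_top {N M : Subgroup G} (hN : IsMaximalNormal N)
    (hM : IsMaximalNormal M) (hNM : N ≠ M) : N ⊔ M = ⊤ := by
  have := hN.1
  have := hM.1
  refine hN.2.2 _ (Subgroup.sup_normal N M) (lt_of_le_of_ne le_sup_left fun h => ?_)
  have hMN : M ≤ N := h ▸ le_sup_right
  exact hNM (hMN.lt_or_eq.elim (fun hlt => absurd (hM.2.2 N hN.1 hlt) hN.2.1) Eq.symm)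

theorem Subgroup.card_inf_mul_card_eq_of_sup_eq_top {N M : Subgroup G} [N.Normal]
    (h : M ⊔ N = ⊤) : Nat.card ↥(N ⊓ M) * Nat.card G = Nat.card N * Nat.card M := by
  have hrel : N.relIndex M = N.index := by
    rw [← relIndex_sup_right, h, relIndex_top_right]
  have hM : Nat.card ↥(N ⊓ M) * N.relIndex M = Nat.card M := by
    have := relIndex_mul_relIndex ⊥ (N ⊓ M) M bot_le inf_le_right
    rwa [relIndex_bot_left, relIndex_bot_left, inf_relIndex_right] at this
  rw [← N.card_mul_index, ← hM, hrel]
  ring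

theorem Subgroup.Normal.mem_of_isConj {N : Subgroup G} (hN : N.Normal) {a b : G}
    (hab : IsConj a b) (ha : a ∈ N) : b ∈ N := by
  obtain ⟨c, rfl⟩ := isConj_iff.mp hab
  exact hN.conj_mem a ha c

open Classical in
noncomputable def classIndicator (N : Subgroup G) : ConjClasses G → ℚ :=
  fun c => if c.carrier ⊆ N then 1 else 0

open Classical in
theorem classIndicator_mk {N : Subgroup G} (hN : N.Normal) (x : G) :
    classIndicator N (ConjClasses.mk x) = if x ∈ N then 1 else 0 := by
  have : (ConjClasses.mk x).carrier ⊆ N ↔ x ∈ N :=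
    ⟨fun h => h ConjClasses.mem_carrier_mk, fun hx y hy =>
      hN.mem_of_isConj (ConjClasses.mk_eq_mk_iff_isConj.mp
        (ConjClasses.mem_carrier_iff_mk_eq.mp hy)).symm hx⟩
  simp only [classIndicator, this]

section ClassFunctions

variable [Fintype G]

noncomputable def classPairing : LinearMap.BilinForm ℚ (ConjClasses G → ℚ) :=
  (dotProductBilin ℚ ℚ).compl₁₂ (LinearMap.funLeft ℚ ℚ ConjClasses.mk)
    (LinearMap.funLeft ℚ ℚ ConjClasses.mk)

theorem classPairing_apply (f g : ConjClasses G → ℚ) :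
    classPairing f g = ∑ x : G, f (ConjClasses.mk x) * g (ConjClasses.mk x) := rfl

theorem classPairing_classIndicator {N M : Subgroup G} (hN : N.Normal) (hM : M.Normal) :
    classPairing (classIndicator N) (classIndicator M) = Nat.card ↥(N ⊓ M) := by
  classical
  simp only [classPairing_apply, classIndicator_mk hN, classIndicator_mk hM, boole_mul,
    ← ite_and, ← Subgroup.mem_inf, Finset.sum_boole, Nat.card_eq_fintype_card, Fintype.card_subtype]

noncomputable def centeredClassIndicator (N : Subgroup G) : ConjClasses G → ℚ :=
  (Nat.card G : ℚ) • classIndicator N - (Nat.card N : ℚ) • classIndicator ⊤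

theorem classPairing_classIndicator_top :
    classPairing (classIndicator (⊤ : Subgroup G)) (classIndicator ⊤) = Nat.card G := by
  rw [classPairing_classIndicator Subgroup.normal_top Subgroup.normal_top, inf_idem,
    Subgroup.card_top]

theorem classPairing_centeredClassIndicator_top {N : Subgroup G} (hN : N.Normal) :
    classPairing (centeredClassIndicator N) (classIndicator ⊤) = 0 := by
  simp only [centeredClassIndicator, map_sub, map_smul, LinearMap.sub_apply,
    LinearMap.smul_apply, classPairing_classIndicator hN Subgroup.normal_top,
    classPairing_classIndicator_top, inf_top_eq, smul_eq_mul]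
  ring

theorem classPairing_top_centeredClassIndicator {N : Subgroup G} (hN : N.Normal) :
    classPairing (classIndicator ⊤) (centeredClassIndicator N) = 0 := by
  simp only [centeredClassIndicator, map_sub, map_smul,
    classPairing_classIndicator Subgroup.normal_top hN, classPairing_classIndicator_top,
    top_inf_eq, smul_eq_mul]
  ring

theorem classPairing_centeredClassIndicator {N M : Subgroup G} (hN : N.Normal)
    (hM : M.Normal) :
    classPairing (centeredClassIndicator N) (centeredClassIndicator M) =
      Nat.card G * (Nat.card G * Nat.card ↥(N ⊓ M) - Nat.card N * Nat.card M) := by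
  simp only [centeredClassIndicator, map_sub, map_smul, LinearMap.sub_apply,
    LinearMap.smul_apply, classPairing_classIndicator hN hM,
    classPairing_classIndicator hN Subgroup.normal_top,
    classPairing_classIndicator Subgroup.normal_top hM, classPairing_classIndicator_top,
    inf_top_eq, top_inf_eq, smul_eq_mul]
  ring

theorem IsMaximalNormal.classPairing_centeredClassIndicator_eq_zero {N M : Subgroup G}
    (hN : IsMaximalNormal N) (hM : IsMaximalNormal M) (hNM : N ≠ M) :
    classPairing (centeredClassIndicator N) (centeredClassIndicator M) = 0 := by
  have := hN.1
  have hcard : (Nat.card ↥(N ⊓ M) : ℚ) * Nat.card G = Nat.card N * Nat.card M := by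
    exact_mod_cast Subgroup.card_inf_mul_card_eq_of_sup_eq_top (hM.sup_eq_top hN hNM.symm)
  rw [classPairing_centeredClassIndicator hN.1 hM.1]
  linear_combination (Nat.card G : ℚ) * hcard

theorem IsMaximalNormal.classPairing_centeredClassIndicator_self_ne_zero {N : Subgroup G}
    (hN : IsMaximalNormal N) :
    classPairing (centeredClassIndicator N) (centeredClassIndicator N) ≠ 0 := by
  have hlt : Nat.card N < Nat.card G :=
    N.card_le_card_group.lt_of_ne (mt N.eq_top_of_card_eq hN.2.1)
  have hpos : 0 < Nat.card N := Nat.card_pos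
  rw [classPairing_centeredClassIndicator hN.1 hN.1, inf_idem]
  have hlt' : (Nat.card N : ℚ) < Nat.card G := by exact_mod_cast hlt
  have hpos' : (0 : ℚ) < Nat.card N := by exact_mod_cast hpos
  exact mul_ne_zero (by linarith) (by nlinarith)

theorem card_isMaximalNormal_add_one_le_card_conjClasses :
    Nat.card {N : Subgroup G // IsMaximalNormal N} + 1 ≤ Nat.card (ConjClasses G) := by
  classical
  let v : Option {N : Subgroup G // IsMaximalNormal N} → ConjClasses G → ℚ :=
    fun o => o.elim (classIndicator ⊤) fun N => centeredClassIndicator N.1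
  have hortho : classPairing.iIsOrtho v := by
    rintro (_ | ⟨N, hN⟩) (_ | ⟨M, hM⟩) hne
    · exact absurd rfl hne
    · exact classPairing_top_centeredClassIndicator hM.1
    · exact classPairing_centeredClassIndicator_top hN.1
    · exact hN.classPairing_centeredClassIndicator_eq_zero hM fun h => hne (by subst h; rfl)
  have hself : ∀ o, classPairing (v o) (v o) ≠ 0 := by
    rintro (_ | ⟨N, hN⟩)
    · exact classPairing_classIndicator_top.trans_ne (Nat.cast_ne_zero.mpr Nat.card_pos.ne')
    · exact hN.classPairing_centeredClassIndicator_self_ne_zero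
  have := (LinearMap.BilinForm.linearIndependent_of_iIsOrtho hortho hself).fintype_card_le_finrank
  rwa [Fintype.card_option, Module.finrank_fintype_fun_eq_card, ← Nat.card_eq_fintype_card,
    ← Nat.card_eq_fintype_card] at this

end ClassFunctions

end MaximalNormal

/-- The number of maximal normal subgroups of a finite group is at most the number of
conjugacy classes minus 1; in particular it is less than the number of conjugacy classes
(which equals the number of irreducible complex representations). -/
theorem card_maximal_normal_lt_card_conjClasses (H : Type*) [Group H] [Finite H] :
    Nat.card {N : Subgroup H // N.Normal ∧ N ≠ ⊤ ∧
        ∀ M : Subgroup H, M.Normal → N < M → M = ⊤} ≤ Nat.card (ConjClasses H) - 1 ∧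
    Nat.card {N : Subgroup H // N.Normal ∧ N ≠ ⊤ ∧
        ∀ M : Subgroup H, M.Normal → N < M → M = ⊤} < Nat.card (ConjClasses H) := by
  have := Fintype.ofFinite H
  have h := card_isMaximalNormal_add_one_le_card_conjClasses (G := H)
  exact ⟨Nat.le_sub_one_of_lt h, h⟩
end

section
/- Let G be a finite solvable group that is a semidirect product G = A ⋊ K with A elementary abelian and K acting irreducibly and nontrivially on A. Then any two maximal subgroups of G with trivial core are conjugate in G. -/
/-!
Both subgroups are complements of `A`, and `A` is its own centralizer. By solvability, `G ⧸ A`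
has a nontrivial normal subgroup `N ⧸ A` of prime exponent `q`, and `q ≠ p` because a normal
`p`-subgroup centralizes the minimal normal subgroup `A`. The `q`-groups `Kᵢ ⊓ N` are then
complements of the `p`-group `A` in `N`, so the abelian Schur–Zassenhaus theorem conjugates
them by some `a ∈ A`. A maximal core-free `Kᵢ` is the normalizer of `Kᵢ ⊓ N ≠ ⊥`, hence
`a` conjugates `K₁` to `K₂`.
-/

open MulAction
open scoped Pointwise

namespace Subgroup

variable {G : Type*} [Group G]

section Complement

variable {H K K' : Subgroup G}

theorem IsComplement'.eq_of_le (h : IsComplement' H K) (h' : IsComplement' H K') (hle : K ≤ K') :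
    K = K' := by
  refine le_antisymm hle fun k hk => ?_
  obtain ⟨⟨a, b⟩, rfl⟩ := h.2 k
  have ha : (a : G) ∈ H ⊓ K' :=
    ⟨a.2, by simpa using K'.mul_mem hk (K'.inv_mem (hle b.2))⟩
  rw [h'.isCompl.inf_eq_bot, mem_bot] at ha
  simp [ha]

theorem IsComplement'.subgroupOf (h : IsComplement' H K) {N : Subgroup G} (hHN : H ≤ N) :
    IsComplement' (H.subgroupOf N) (K.subgroupOf N) := by
  refine ⟨fun x y hxy => ?_, fun n => ?_⟩
  · have := @h.1 (⟨x.1, x.1.2⟩, ⟨x.2, x.2.2⟩) (⟨y.1, y.1.2⟩, ⟨y.2, y.2.2⟩)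
      (congrArg Subtype.val hxy)
    simpa only [Prod.ext_iff, Subtype.ext_iff] using this
  · obtain ⟨⟨a, k⟩, hak⟩ := h.2 n
    have hk : (k : G) ∈ N := by simpa [← hak] using N.mul_mem (N.inv_mem (hHN a.2)) n.2
    exact ⟨(⟨⟨a, hHN a.2⟩, a.2⟩, ⟨⟨k, hk⟩, k.2⟩), Subtype.ext hak⟩

variable [H.Normal] [IsMulCommutative H] [H.FiniteIndex]

/-- A complement of `H` is a left transversal of `H`; this is its class modulo `diff`. -/
noncomputable def IsComplement'.quotientDiff (h : IsComplement' H K) : H.QuotientDiff :=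
  Quotient.mk'' ⟨K, h.symm⟩

theorem IsComplement'.stabilizer_quotientDiff (hcop : (Nat.card H).Coprime H.index)
    (h : IsComplement' H K) : stabilizer G h.quotientDiff = K := by
  refine (h.eq_of_le (isComplement'_stabilizer_of_coprime hcop) fun k hk => ?_).symm
  exact congrArg Quotient.mk'' (Subtype.ext (op_smul_coe_set (K.inv_mem hk)))

theorem IsComplement'.exists_map_conj_eq_of_coprime (hcop : (Nat.card H).Coprime H.index)
    (h₁ : IsComplement' H K) (h₂ : IsComplement' H K') :
    ∃ a ∈ H, K.map (MulAut.conj a).toMonoidHom = K' := by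
  obtain ⟨a, ha⟩ := exists_smul_eq hcop h₁.quotientDiff h₂.quotientDiff
  refine ⟨a, a.2, ?_⟩
  rw [← h₁.stabilizer_quotientDiff hcop, ← h₂.stabilizer_quotientDiff hcop, ← ha,
    ← stabilizer_smul_eq_stabilizer_map_conj]
  rfl

end Complement

theorem map_map_conj_subgroupOf (K N : Subgroup G) (a : N) :
    ((K.subgroupOf N).map (MulAut.conj a).toMonoidHom).map N.subtype =
      (K ⊓ N).map (MulAut.conj (a : G)).toMonoidHom := by
  rw [map_map, ← subgroupOf_map_subtype, map_map]
  congr 1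

theorem exists_map_conj_inf_eq_of_isPGroup [Finite G] {p q : ℕ} [Fact p.Prime] [Fact q.Prime]
    (hpq : p ≠ q) {A N K₁ K₂ : Subgroup G} [A.Normal] [IsMulCommutative A] (hAN : A ≤ N)
    (h₁ : IsComplement' A K₁) (h₂ : IsComplement' A K₂) (hAp : IsPGroup p A)
    (hKq : IsPGroup q (K₁ ⊓ N : Subgroup G)) :
    ∃ a ∈ A, (K₁ ⊓ N).map (MulAut.conj a).toMonoidHom = K₂ ⊓ N := by
  have hcop : (Nat.card (A.subgroupOf N)).Coprime (A.subgroupOf N).index := by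
    rw [(h₁.subgroupOf hAN).symm.index_eq_card]
    exact IsPGroup.coprime_card_of_ne p q hpq _ _ hAp.comap_subtype
      (inf_subgroupOf_right K₁ N ▸ hKq.comap_subtype)
  obtain ⟨a, ha, hmap⟩ :=
    (h₁.subgroupOf hAN).exists_map_conj_eq_of_coprime hcop (h₂.subgroupOf hAN)
  exact ⟨a, ha, by rw [← map_map_conj_subgroupOf, hmap, subgroupOf_map_subtype]⟩

section CoreFree

variable {A M : Subgroup G} [A.Normal]

theorem sup_eq_top_of_isCoatom_of_normalCore_eq_bot (hA : A ≠ ⊥) (hM : IsCoatom M)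
    (hcore : M.normalCore = ⊥) : A ⊔ M = ⊤ := by
  refine hM.2 _ (right_lt_sup.mpr fun hAM => hA ?_)
  rw [← le_bot_iff, ← hcore]
  exact normal_le_normalCore.mpr hAM

theorem centralizer_inf_eq_bot_of_normalCore_eq_bot (hsup : A ⊔ M = ⊤)
    (hcore : M.normalCore = ⊥) : centralizer A ⊓ M = ⊥ := by
  have hA : A ≤ normalizer (centralizer A ⊓ M : Subgroup G) :=
    (le_centralizer_iff.mp inf_le_left).trans (centralizer_le_normalizer _)
  have hM : M ≤ normalizer (centralizer A ⊓ M : Subgroup G) :=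
    (le_inf le_normalizer_of_normal le_normalizer).trans inf_normalizer_le_normalizer_inf
  have : (centralizer A ⊓ M).Normal :=
    normalizer_eq_top_iff.mp (top_le_iff.mp (hsup ▸ sup_le hA hM))
  rw [← le_bot_iff, ← hcore]
  exact normal_le_normalCore.mpr inf_le_right

theorem le_of_sup_eq_top_of_inf_eq_bot {H : Subgroup G} (hAH : A ≤ H) (hsup : A ⊔ M = ⊤)
    (hHM : H ⊓ M = ⊥) : H ≤ A := by
  intro h hh
  obtain ⟨a, ha, m, hm, rfl⟩ : h ∈ (A : Set G) * M := by
    rw [← normal_mul, hsup]; trivial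
  have hm' : m ∈ H ⊓ M := ⟨by simpa using H.mul_mem (H.inv_mem (hAH ha)) hh, hm⟩
  rw [hHM, mem_bot] at hm'
  simpa [hm'] using ha

theorem isComplement'_of_normalCore_eq_bot (hAc : A ≤ centralizer A) (hsup : A ⊔ M = ⊤)
    (hcore : M.normalCore = ⊥) : IsComplement' A M := by
  refine isComplement'_of_disjoint_and_mul_eq_univ (disjoint_iff.mpr ?_)
    (by rw [← normal_mul, hsup]; rfl)
  rw [← le_bot_iff, ← centralizer_inf_eq_bot_of_normalCore_eq_bot hsup hcore]
  exact inf_le_inf_right M hAc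

theorem centralizer_le_of_normalCore_eq_bot (hAc : A ≤ centralizer A) (hsup : A ⊔ M = ⊤)
    (hcore : M.normalCore = ⊥) : centralizer A ≤ A :=
  le_of_sup_eq_top_of_inf_eq_bot hAc hsup (centralizer_inf_eq_bot_of_normalCore_eq_bot hsup hcore)

end CoreFree

section PGroup

variable [Finite G] {p : ℕ} [Fact p.Prime] {A N : Subgroup G} [A.Normal]

theorem _root_.IsPGroup.inf_centralizer_ne_bot (hA : IsPGroup p A) (hA' : A ≠ ⊥)
    (hN : IsPGroup p N) : A ⊓ centralizer N ≠ ⊥ := by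
  set N' := N.map (ConjAct.toConjAct : G ≃* ConjAct G).toMonoidHom
  have hdvd : p ∣ Nat.card A :=
    hA.card_eq_or_dvd.resolve_left fun h => hA' (card_eq_one.mp h)
  have hfix : (1 : A) ∈ fixedPoints N' A := fun n => smul_one (n : ConjAct G)
  obtain ⟨b, hb, hne⟩ :=
    (hN.map _).exists_fixed_point_of_prime_dvd_card_of_fixed_point (G := N') A hdvd hfix
  refine fun hbot => hne.symm (Subtype.ext ?_)
  have hb' : (b : G) ∈ A ⊓ centralizer N := by
    refine ⟨b.2, fun n hn => ?_⟩
    have := congrArg Subtype.val (hb ⟨ConjAct.toConjAct n, mem_map_of_mem _ hn⟩)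
    simp only [smul_def, ConjAct.Subgroup.val_conj_smul, ConjAct.smul_def,
      ConjAct.ofConjAct_toConjAct] at this
    exact mul_inv_eq_iff_eq_mul.mp this
  rw [hbot, mem_bot] at hb'
  exact hb'

theorem le_of_isPGroup_of_normal [N.Normal] (hAp : IsPGroup p A) (hA : A ≠ ⊥)
    (hmin : ∀ B : Subgroup G, B.Normal → B ≤ A → B = ⊥ ∨ B = A) (hcent : centralizer A ≤ A)
    (hN : IsPGroup p N) : N ≤ A := by
  have h := (hmin _ inferInstance inf_le_left).resolve_left (hAp.inf_centralizer_ne_bot hA hN)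
  exact (le_centralizer_iff.mp (inf_eq_left.mp h)).trans hcent

end PGroup

section Solvable

theorem exists_normal_le_commutator_eq_bot [Group.IsSolvable G] [WellFoundedLT (Subgroup G)]
    (H : Subgroup G) [hHn : H.Normal] (hH : H ≠ ⊥) :
    ∃ M ≤ H, M.Normal ∧ M ≠ ⊥ ∧ ⁅M, M⁆ = ⊥ := by
  revert hHn hH
  induction H using WellFoundedLT.induction with
  | ind H ih =>
    intro _ hH
    by_cases hc : ⁅H, H⁆ = ⊥
    · exact ⟨H, le_rfl, ‹_›, hH, hc⟩
    · obtain ⟨M, hM, hMn, hMb, hMc⟩ := ih _ (Group.IsSolvable.commutator_lt_of_ne_bot hH) hc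
      exact ⟨M, hM.trans (commutator_le_left H H), hMn, hMb, hMc⟩

def torsionBy (M : Subgroup G) (hM : M ≤ centralizer M) (n : ℕ) : Subgroup G where
  carrier := {x | x ∈ M ∧ x ^ n = 1}
  one_mem' := ⟨M.one_mem, one_pow n⟩
  mul_mem' {x y} hx hy := ⟨M.mul_mem hx.1 hy.1, by
    rw [(Commute.mul_pow (hM hy.1 x hx.1) n), hx.2, hy.2, one_mul]⟩
  inv_mem' hx := ⟨M.inv_mem hx.1, by rw [inv_pow, hx.2, inv_one]⟩

instance torsionBy_normal (M : Subgroup G) [M.Normal] (hM : M ≤ centralizer M) (n : ℕ) :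
    (M.torsionBy hM n).Normal where
  conj_mem x hx g :=
    ⟨Normal.conj_mem ‹_› x hx.1 g, by rw [conj_pow, hx.2, mul_one, mul_inv_cancel]⟩

theorem exists_prime_normal_ne_bot_pow_eq_one [Finite G] [Group.IsSolvable G] [Nontrivial G] :
    ∃ q, q.Prime ∧ ∃ P : Subgroup G, P.Normal ∧ P ≠ ⊥ ∧ ∀ x ∈ P, x ^ q = 1 := by
  obtain ⟨M, -, hMn, hMb, hMc⟩ := exists_normal_le_commutator_eq_bot (⊤ : Subgroup G) top_ne_bot
  have hM := commutator_eq_bot_iff_le_centralizer.mp hMc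
  obtain ⟨q, hq, hqM⟩ := Nat.exists_prime_and_dvd fun h => hMb (card_eq_one.mp h)
  have : Fact q.Prime := ⟨hq⟩
  obtain ⟨x, hx⟩ := exists_prime_orderOf_dvd_card' q hqM
  refine ⟨q, hq, M.torsionBy hM q, inferInstance, fun hbot => ?_, fun x hx => hx.2⟩
  have hx' : (x : G) ∈ M.torsionBy hM q :=
    ⟨x.2, by rw [← hx]; exact_mod_cast pow_orderOf_eq_one x⟩
  rw [hbot, mem_bot] at hx'
  exact hq.one_lt.ne' (by rw [← hx, orderOf_eq_one_iff.mpr (Subtype.ext hx')])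

theorem exists_normal_gt_pow_mem [Finite G] [Group.IsSolvable G] {A : Subgroup G} [A.Normal]
    (hA : A ≠ ⊤) : ∃ q, q.Prime ∧ ∃ N : Subgroup G, N.Normal ∧ A < N ∧ ∀ x ∈ N, x ^ q ∈ A := by
  have : Nontrivial (G ⧸ A) := QuotientGroup.nontrivial_iff.mpr hA
  obtain ⟨q, hq, P, hPn, hPb, hPq⟩ := exists_prime_normal_ne_bot_pow_eq_one (G := G ⧸ A)
  refine ⟨q, hq, P.comap (QuotientGroup.mk' A), hPn.comap _, ?_, fun x hx => ?_⟩
  · refine lt_of_le_of_ne (fun a ha => ?_) fun h => hPb ?_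
    · rw [mem_comap, QuotientGroup.mk'_apply, (QuotientGroup.eq_one_iff a).mpr ha]
      exact P.one_mem
    · refine (eq_bot_iff_forall P).mpr fun x hx => ?_
      obtain ⟨g, rfl⟩ := QuotientGroup.mk_surjective x
      exact (QuotientGroup.eq_one_iff g).mpr (h ▸ hx)
  · rw [← QuotientGroup.eq_one_iff, QuotientGroup.mk_pow]
    exact hPq _ hx

end Solvable

theorem normalizer_eq_of_isCoatom {K Q : Subgroup G} (hK : IsCoatom K) (hcore : K.normalCore = ⊥)
    (hQK : Q ≤ K) (hQ : Q ≠ ⊥) (hKQ : K ≤ normalizer (Q : Set G)) :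
    normalizer (Q : Set G) = K := by
  refine (hK.le_iff.mp hKQ).resolve_left fun htop => hQ ?_
  have : Q.Normal := normalizer_eq_top_iff.mp htop
  rw [← le_bot_iff, ← hcore]
  exact normal_le_normalCore.mpr hQK

theorem map_conj_eq_of_map_conj_inf_eq {K₁ K₂ N : Subgroup G} [N.Normal] (h₁ : IsCoatom K₁)
    (h₂ : IsCoatom K₂) (hc₂ : K₂.normalCore = ⊥) (hN : K₂ ⊓ N ≠ ⊥) {g : G}
    (hg : (K₁ ⊓ N).map (MulAut.conj g).toMonoidHom = K₂ ⊓ N) :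
    K₁.map (MulAut.conj g).toMonoidHom = K₂ := by
  have hle (K : Subgroup G) : K ≤ normalizer (K ⊓ N : Subgroup G) :=
    (le_inf K.le_normalizer le_normalizer_of_normal).trans inf_normalizer_le_normalizer_inf
  have h₁' : IsCoatom (K₁.map (MulAut.conj g).toMonoidHom) :=
    ((MulAut.conj g).mapSubgroup.isCoatom_iff K₁).mpr h₁
  refine ((h₁'.le_iff_eq h₂.1).mp ?_).symm
  rw [← normalizer_eq_of_isCoatom h₂ hc₂ inf_le_left hN (hle K₂), ← hg, ← map_equiv_normalizer_eq]
  exact map_mono (hle K₁)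

end Subgroup

open Subgroup

theorem maximal_trivial_core_conjugate_general (G : Type*) [Group G] [Finite G] [Group.IsSolvable G]
    (A K : Subgroup G) (hA : A.Normal)
    (p : ℕ) (hp : p.Prime) (hel : ∀ a ∈ A, a ^ p = 1)
    (hab : ∀ a ∈ A, ∀ b ∈ A, a * b = b * a)
    (hirr : ∀ B : Subgroup G, B ≤ A → (∀ k ∈ K, ∀ b ∈ B, k * b * k⁻¹ ∈ B) →
      B = ⊥ ∨ B = A)
    (hnontriv : ∃ k ∈ K, ∃ a ∈ A, k * a * k⁻¹ ≠ a)
    (K₁ K₂ : Subgroup G) (h₁ : IsCoatom K₁) (h₂ : IsCoatom K₂)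
    (hc₁ : K₁.normalCore = ⊥) (hc₂ : K₂.normalCore = ⊥) :
    ∃ g : G, Subgroup.map (MulAut.conj g).toMonoidHom K₁ = K₂ := by
  have : Fact p.Prime := ⟨hp⟩
  obtain ⟨k, -, a, ha, hka⟩ := hnontriv
  have hAbot : A ≠ ⊥ := fun h => hka (by simp [mem_bot.mp (h ▸ ha)])
  have hAtop : A ≠ ⊤ := fun h => hka (by rw [hab k (h ▸ mem_top k) a ha, mul_inv_cancel_right])
  have hAc : A ≤ centralizer A := fun a ha b hb => hab b hb a ha
  have : IsMulCommutative A := le_centralizer_iff_isMulCommutative.mp hAc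
  have hAp : IsPGroup p A := fun a => ⟨1, Subtype.ext (by simpa using hel a a.2)⟩
  have hmin (B : Subgroup G) (hB : B.Normal) (hBA : B ≤ A) : B = ⊥ ∨ B = A :=
    hirr B hBA fun k _ b hb => hB.conj_mem b hb k
  have hK₁ := isComplement'_of_normalCore_eq_bot hAc
    (sup_eq_top_of_isCoatom_of_normalCore_eq_bot hAbot h₁ hc₁) hc₁
  have hK₂ := isComplement'_of_normalCore_eq_bot hAc
    (sup_eq_top_of_isCoatom_of_normalCore_eq_bot hAbot h₂ hc₂) hc₂
  obtain ⟨q, hq, N, hN, hAN, hNq⟩ := exists_normal_gt_pow_mem hAtop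
  have : Fact q.Prime := ⟨hq⟩
  have hpq : p ≠ q := by
    rintro rfl
    refine hAN.not_ge (le_of_isPGroup_of_normal hAp hAbot hmin
      (centralizer_le_of_normalCore_eq_bot hAc hK₁.sup_eq_top hc₁) fun x => ⟨2, Subtype.ext ?_⟩)
    simpa [pow_two, pow_mul] using hel _ (hNq x x.2)
  have hKq : IsPGroup q (K₁ ⊓ N : Subgroup G) := by
    intro x
    have hx : (x : G) ^ q ∈ A ⊓ K₁ := ⟨hNq _ x.2.2, K₁.pow_mem x.2.1 q⟩
    rw [hK₁.isCompl.inf_eq_bot, mem_bot] at hx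
    exact ⟨1, Subtype.ext (by simpa using hx)⟩
  obtain ⟨g, -, hg⟩ := exists_map_conj_inf_eq_of_isPGroup hpq hAN.le hK₁ hK₂ hAp hKq
  refine ⟨g, map_conj_eq_of_map_conj_inf_eq h₁ h₂ hc₂ (fun h => hAN.not_ge ?_) hg⟩
  exact le_of_sup_eq_top_of_inf_eq_bot hAN.le hK₂.sup_eq_top (by rw [inf_comm, h])

/-- In a finite solvable group `G = A ⋊ K` with `A` elementary abelian and `K` acting
irreducibly and nontrivially on `A`, any two maximal subgroups with trivial core are
conjugate. -/
theorem maximal_trivial_core_conjugate (G : Type*) [Group G] [Finite G] [Group.IsSolvable G]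
    (A K : Subgroup G) (hA : A.Normal)
    (p : ℕ) (hp : p.Prime) (hel : ∀ a ∈ A, a ^ p = 1)
    (hab : ∀ a ∈ A, ∀ b ∈ A, a * b = b * a)
    (hcompl : Subgroup.IsComplement' A K)
    (hirr : ∀ B : Subgroup G, B ≤ A → (∀ k ∈ K, ∀ b ∈ B, k * b * k⁻¹ ∈ B) →
      B = ⊥ ∨ B = A)
    (hnontriv : ∃ k ∈ K, ∃ a ∈ A, k * a * k⁻¹ ≠ a)
    (K₁ K₂ : Subgroup G) (h₁ : IsCoatom K₁) (h₂ : IsCoatom K₂)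
    (hc₁ : K₁.normalCore = ⊥) (hc₂ : K₂.normalCore = ⊥) :
    ∃ g : G, Subgroup.map (MulAut.conj g).toMonoidHom K₁ = K₂ :=
  maximal_trivial_core_conjugate_general G A K hA p hp hel hab hirr hnontriv K₁ K₂ h₁ h₂ hc₁ hc₂
end
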